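/- If coarse structures E and E' on a set X are λ-equivalent, then they have the same macro-uniform real-valued functions: mu(X, E) = mu(X, E'). -/

import Mathlib

open Set

/-- A coarse structure (ballean) on a set `X`. -/
structure CoarseStruct (X : Type*) where
  sets : Set (Set (X × X))
  diagonal_mem : Set.diagonal X ∈ sets
  diagonal_subset : ∀ E ∈ sets, Set.diagonal X ⊆ E
  comp_mem : ∀ E ∈ sets, ∀ F ∈ sets,
    {p : X × X | ∃ z, (p.1, z) ∈ E ∧ (z, p.2) ∈ F} ∈ sets
  inv_mem : ∀ E ∈ sets, {p : X × X | (p.2, p.1) ∈ E} ∈ sets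
  subset_mem : ∀ E ∈ sets, ∀ E' : Set (X × X),
    Set.diagonal X ⊆ E' → E' ⊆ E → E' ∈ sets
  cover : ∀ p : X × X, ∃ E ∈ sets, p ∈ E

namespace CoarseStruct

variable {X : Type*}

/-- The ball `E[A]` of radius `E` around `A`. -/
def ball (E : Set (X × X)) (A : Set X) : Set X := {y | ∃ a ∈ A, (a, y) ∈ E}

/-- A set is bounded if it is contained in a ball around a point. -/
def IsBounded (C : CoarseStruct X) (B : Set X) : Prop :=
  ∃ E ∈ C.sets, ∃ x : X, B ⊆ ball E {x}

/-- Closeness: `A δ B`. -/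
def Close (C : CoarseStruct X) (A B : Set X) : Prop :=
  ∃ E ∈ C.sets, A ⊆ ball E B ∧ B ⊆ ball E A

/-- Linkness: `A λ B`. -/
def Linked (C : CoarseStruct X) (A B : Set X) : Prop :=
  (C.IsBounded A ∧ C.IsBounded B) ∨
  ∃ A' B' : Set X, A' ⊆ A ∧ B' ⊆ B ∧ ¬C.IsBounded A' ∧ ¬C.IsBounded B' ∧ C.Close A' B'

def LambdaEquiv (C C' : CoarseStruct X) : Prop :=
  ∀ A B : Set X, C.Linked A B ↔ C'.Linked A B

def DeltaEquiv (C C' : CoarseStruct X) : Prop :=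
  ∀ A B : Set X, C.Close A B ↔ C'.Close A B

def Discrete (C : CoarseStruct X) : Prop :=
  ∀ E ∈ C.sets, ∃ B : Set X, C.IsBounded B ∧ ∀ x ∉ B, ball E {x} = {x}

def Large (C : CoarseStruct X) (Y : Set X) : Prop :=
  ∃ E ∈ C.sets, ball E Y = Set.univ

/-- The subballean on `Y` is discrete. -/
def DiscreteOn (C : CoarseStruct X) (Y : Set X) : Prop :=
  ∀ E ∈ C.sets, ∃ B : Set X, C.IsBounded B ∧ ∀ y ∈ Y \ B, ball E {y} ∩ Y = {y}

def CoarselyDiscrete (C : CoarseStruct X) : Prop :=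
  ∃ Y : Set X, C.Large Y ∧ C.DiscreteOn Y

def LambdaRigid (C : CoarseStruct X) : Prop :=
  ∀ C' : CoarseStruct X, LambdaEquiv C C' → C' = C

def DeltaRigid (C : CoarseStruct X) : Prop :=
  ∀ C' : CoarseStruct X, DeltaEquiv C C' → C' = C

def IsBase (C : CoarseStruct X) (B : Set (Set (X × X))) : Prop :=
  B ⊆ C.sets ∧ ∀ E ∈ C.sets, ∃ E' ∈ B, E ⊆ E'

/-- Metrizable: the coarse structure has a countable base. -/
def Metrizable (C : CoarseStruct X) : Prop :=
  ∃ B : Set (Set (X × X)), B.Countable ∧ C.IsBase B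

/-- Ordinal: the coarse structure has a base linearly ordered by inclusion. -/
def Ordinal (C : CoarseStruct X) : Prop :=
  ∃ B : Set (Set (X × X)), C.IsBase B ∧ IsChain (· ⊆ ·) B

def MacroUniform (C : CoarseStruct X) (f : X → ℝ) : Prop :=
  ∀ E ∈ C.sets, ∃ r : ℝ, 0 < r ∧
    ∀ x : X, ∀ y ∈ ball E {x}, ∀ z ∈ ball E {x}, |f y - f z| ≤ r

def Submetrizable (C : CoarseStruct X) : Prop :=
  ¬C.IsBounded Set.univ ∧ ∃ C'' : CoarseStruct X,
    C.sets ⊆ C''.sets ∧ ¬C''.IsBounded Set.univ ∧ C''.Metrizable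

def SlowlyOscillating (C : CoarseStruct X) (f : X → ℝ) : Prop :=
  ∀ E ∈ C.sets, ∀ ε : ℝ, 0 < ε → ∃ B : Set X, C.IsBounded B ∧
    ∀ x ∉ B, ∀ y ∈ ball E {x}, ∀ z ∈ ball E {x}, |f y - f z| < ε

/-- The entourage `H_{(E,Φ)}`: `H[x] = {x}` for `x ∈ Φ` and `H[x] = E[x] \ Φ` for `x ∉ Φ`. -/
def EPhiBase (E : Set (X × X)) (Φ : Set X) : Set (X × X) :=
  {p | (p.1 ∈ Φ ∧ p.1 = p.2) ∨ (p.1 ∉ Φ ∧ p.2 ∉ Φ ∧ (p.1, p.2) ∈ E)}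

/-- The family of entourages of the coarse structure `E_φ` with base `{H_{(E,Φ)}}`. -/
def EPhiSets (C : CoarseStruct X) (φ : Filter X) : Set (Set (X × X)) :=
  {E' | Set.diagonal X ⊆ E' ∧ ∃ E ∈ C.sets, ∃ Φ ∈ φ, E' ⊆ EPhiBase E Φ}

/-- The set `B♯` of ultrafilters containing the complement of every bounded set. -/
def Bsharp (C : CoarseStruct X) : Set (Ultrafilter X) :=
  {p | ∀ B : Set X, C.IsBounded B → Bᶜ ∈ p}

/-- Parallelity of ultrafilters: `p ∥ q`. -/
def Parallel (C : CoarseStruct X) (p q : Ultrafilter X) : Prop :=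
  ∃ E ∈ C.sets, ∀ P ∈ p, ball E P ∈ q

def AsympDisjoint (C : CoarseStruct X) (A B : Set X) : Prop :=
  ∀ E ∈ C.sets, C.IsBounded (ball E A ∩ ball E B)

def AsympNbhd (C : CoarseStruct X) (A U : Set X) : Prop :=
  ∀ E ∈ C.sets, C.IsBounded (ball E A \ U)

def Normal (C : CoarseStruct X) : Prop :=
  ∀ A B : Set X, C.AsympDisjoint A B →
    ∃ U V : Set X, C.AsympNbhd A U ∧ C.AsympNbhd B V ∧ Disjoint U V

end CoarseStruct

/-!
Suppose `f` is macro-uniform for `C` but its oscillation on the balls of some `E ∈ C'` is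
unbounded. Then the `C'`-entourage `E⁻¹ ∘ E` contains pairs `(y, z)` with `|f y - f z|` as
large as we like, and these can be selected so that the `k`-th second coordinate `z_k` is at
`f`-distance more than `k` from every first coordinate: orient each pair so that `|f y| ≤ |f z|`;
if the `|f y|` can be kept bounded this is immediate, otherwise take pairs whose `|f y|` exceed
all values chosen before. The sets `A = {y_k}` and `B = {z_k}` are
`C'`-close, hence `C'`-linked, hence `C`-linked, and `B` is `C`-unbounded because `f` is
unbounded on it. Linkedness then puts an unbounded part of `B` within bounded `f`-distance of
`A`, which only finitely many `z_k` can be.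
-/

open SetRel

namespace CoarseStruct

variable {X : Type*} {C C' : CoarseStruct X} {A B : Set X} {E F : Set (X × X)}

lemma ball_eq_image (E : Set (X × X)) (A : Set X) : ball E A = SetRel.image E A := rfl

lemma union_mem (hE : E ∈ C.sets) (hF : F ∈ C.sets) : E ∪ F ∈ C.sets := by
  refine C.subset_mem _ (C.comp_mem E hE F hF) _
    ((C.diagonal_subset E hE).trans subset_union_left) (union_subset ?_ ?_)
  · rintro ⟨a, b⟩ h
    exact ⟨b, h, C.diagonal_subset F hF rfl⟩
  · rintro ⟨a, b⟩ h
    exact ⟨a, C.diagonal_subset E hE rfl, h⟩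

lemma isBounded_singleton (C : CoarseStruct X) (x : X) : C.IsBounded {x} :=
  ⟨diagonal X, C.diagonal_mem, x, fun y hy => ⟨y, hy, rfl⟩⟩

lemma IsBounded.mono (hB : C.IsBounded B) (hAB : A ⊆ B) : C.IsBounded A := by
  obtain ⟨E, hE, x, hx⟩ := hB
  exact ⟨E, hE, x, hAB.trans hx⟩

lemma isBounded_ball (hA : C.IsBounded A) (hE : E ∈ C.sets) : C.IsBounded (ball E A) := by
  obtain ⟨F, hF, x, hx⟩ := hA
  refine ⟨F ○ E, C.comp_mem F hF E hE, x, ?_⟩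
  rw [ball_eq_image, ball_eq_image, SetRel.image_comp]
  exact image_subset_image hx

lemma IsBounded.exists_subset_ball (hA : C.IsBounded A) (y : X) :
    ∃ E ∈ C.sets, A ⊆ ball E {y} := by
  obtain ⟨E, hE, x, hx⟩ := hA
  obtain ⟨F, hF, hyx⟩ := C.cover (y, x)
  refine ⟨F ○ E, C.comp_mem F hF E hE, hx.trans ?_⟩
  rw [ball_eq_image, ball_eq_image, SetRel.image_comp]
  exact image_subset_image (singleton_subset_iff.2 ⟨y, rfl, hyx⟩)

lemma IsBounded.union (hA : C.IsBounded A) (hB : C.IsBounded B) : C.IsBounded (A ∪ B) := by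
  rcases A.eq_empty_or_nonempty with rfl | ⟨y, -⟩
  · rwa [empty_union]
  obtain ⟨E, hE, hAE⟩ := hA.exists_subset_ball y
  obtain ⟨F, hF, hBF⟩ := hB.exists_subset_ball y
  exact ⟨E ∪ F, union_mem hE hF, y, union_subset
    (hAE.trans (image_subset_image_left subset_union_left))
    (hBF.trans (image_subset_image_left subset_union_right))⟩

lemma isBounded_of_finite [Nonempty X] (hA : A.Finite) : C.IsBounded A := by
  induction A, hA using Set.Finite.induction_on with
  | empty => exact ⟨diagonal X, C.diagonal_mem, Classical.arbitrary X, empty_subset _⟩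
  | @insert a s _ _ ih => exact (C.isBounded_singleton a).union ih

lemma Close.linked (hAB : C.Close A B) : C.Linked A B := by
  obtain ⟨E, hE, hAE, hBE⟩ := hAB
  by_cases hA : C.IsBounded A
  · exact Or.inl ⟨hA, (isBounded_ball hA hE).mono hBE⟩
  · refine Or.inr ⟨A, B, subset_rfl, subset_rfl, hA, fun hB => ?_, E, hE, hAE, hBE⟩
    exact hA ((isBounded_ball hB hE).mono hAE)

lemma LambdaEquiv.symm (h : LambdaEquiv C C') : LambdaEquiv C' C := fun A B => (h A B).symm

lemma MacroUniform.isBounded_image {f : X → ℝ} (hf : C.MacroUniform f) (hB : C.IsBounded B) :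
    Bornology.IsBounded (f '' B) := by
  obtain ⟨E, hE, x, hx⟩ := hB
  obtain ⟨r, -, hr⟩ := hf E hE
  refine Metric.isBounded_iff.2 ⟨r, ?_⟩
  rintro _ ⟨y, hy, rfl⟩ _ ⟨z, hz, rfl⟩
  exact (Real.dist_eq _ _).trans_le (hr x y (hx hy) z (hx hz))

lemma MacroUniform.exists_not_isBounded_near {f : X → ℝ} (hf : C.MacroUniform f)
    (hAB : C.Linked A B) (hB : ¬C.IsBounded B) :
    ∃ r : ℝ, ¬C.IsBounded {b ∈ B | ∃ a ∈ A, |f b - f a| ≤ r} := by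
  rcases hAB with ⟨-, hB'⟩ | ⟨A', B', hA'A, hB'B, -, hB'unb, E, hE, -, hB'E⟩
  · exact absurd hB' hB
  obtain ⟨r, -, hr⟩ := hf E hE
  refine ⟨r, fun hnear => hB'unb (hnear.mono fun b hb => ?_)⟩
  obtain ⟨a, ha, hab⟩ := hB'E hb
  exact ⟨hB'B hb, a, hA'A ha, hr a b ⟨a, rfl, hab⟩ a ⟨a, rfl, C.diagonal_subset E hE rfl⟩⟩

end CoarseStruct

section SpreadPairs

variable {α : Type*} {G : Set (α × α)} {g : α → ℝ}

lemma exists_seq_lt_abs_sub_of_fst_bounded (c : ℝ)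
    (h : ∀ R : ℝ, ∃ q ∈ G, |g q.1| ≤ c ∧ R < |g q.1 - g q.2|) :
    ∃ p : ℕ → α × α, (∀ k, p k ∈ G) ∧ ∀ k i : ℕ, (k : ℝ) < |g (p k).2 - g (p i).1| := by
  choose P hPG hPc hPR using h
  refine ⟨fun k => P (k + 2 * c), fun k => hPG _, fun k i => ?_⟩
  have hk := hPR (k + 2 * c)
  have hck := hPc (k + 2 * c)
  have hci := hPc (i + 2 * c)
  have htri := abs_sub_le (g (P (k + 2 * c)).1) (g (P (i + 2 * c)).1) (g (P (k + 2 * c)).2)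
  have hfst := abs_sub (g (P (k + 2 * c)).1) (g (P (i + 2 * c)).1)
  rw [abs_sub_comm (g (P (i + 2 * c)).1)] at htri
  linarith

lemma exists_seq_lt_abs_sub_of_fst_unbounded
    (h : ∀ c R : ℝ, ∃ q ∈ G, c < |g q.1| ∧ |g q.1| ≤ |g q.2| ∧ R < |g q.1 - g q.2|) :
    ∃ p : ℕ → α × α, (∀ k, p k ∈ G) ∧ ∀ k i : ℕ, (k : ℝ) < |g (p k).2 - g (p i).1| := by
  choose P hPG hPc hPle hPR using h
  let p : ℕ → α × α := fun k => Nat.rec (P 0 0) (fun k q => P (|g q.2| + (k + 1)) (k + 1)) k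
  have hp : ∀ k, p k ∈ G ∧ |g (p k).1| ≤ |g (p k).2| ∧ (k : ℝ) < |g (p k).1 - g (p k).2| := by
    rintro (_ | k)
    · exact ⟨hPG _ _, hPle _ _, by rw [Nat.cast_zero]; exact hPR _ _⟩
    · exact ⟨hPG _ _, hPle _ _, by rw [Nat.cast_succ]; exact hPR _ _⟩
  have hgrow (k : ℕ) : |g (p k).2| + (k + 1) < |g (p (k + 1)).1| := hPc _ _
  have hsep (i k : ℕ) (hik : i < k) : |g (p i).2| + k < |g (p k).1| := by
    induction k, hik using Nat.le_induction with
    | base => exact_mod_cast hgrow i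
    | succ k _ ih =>
      have := hgrow k
      have := (hp k).2.1
      push_cast
      linarith
  refine ⟨p, fun k => (hp k).1, fun k i => ?_⟩
  rcases lt_trichotomy i k with hik | rfl | hki
  · have := hsep i k hik
    have := (hp i).2.1
    have := (hp k).2.1
    have := abs_sub_abs_le_abs_sub (g (p k).2) (g (p i).1)
    linarith
  · rw [abs_sub_comm]
    exact (hp i).2.2
  · have := hsep k i hki
    have : (k : ℝ) < i := by exact_mod_cast hki
    have := abs_sub_abs_le_abs_sub (g (p i).1) (g (p k).2)
    rw [abs_sub_comm]
    linarith

lemma exists_seq_lt_abs_sub (hG : ∀ a b, (a, b) ∈ G → (b, a) ∈ G)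
    (h : ∀ R : ℝ, ∃ q ∈ G, R < |g q.1 - g q.2|) :
    ∃ p : ℕ → α × α, (∀ k, p k ∈ G) ∧ ∀ k i : ℕ, (k : ℝ) < |g (p k).2 - g (p i).1| := by
  by_cases hfst : ∃ c, ∀ R : ℝ, ∃ q ∈ G, |g q.1| ≤ c ∧ R < |g q.1 - g q.2|
  · obtain ⟨c, hc⟩ := hfst
    exact exists_seq_lt_abs_sub_of_fst_bounded c hc
  push Not at hfst
  refine exists_seq_lt_abs_sub_of_fst_unbounded fun c R => ?_
  obtain ⟨R₀, hR₀⟩ := hfst c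
  obtain ⟨⟨a, b⟩, hab, hR⟩ := h (max R R₀)
  have hR₀' : R₀ < |g a - g b| := (le_max_right R R₀).trans_lt hR
  have hR' : R < |g a - g b| := (le_max_left R R₀).trans_lt hR
  rcases le_total |g a| |g b| with hle | hle
  · exact ⟨(a, b), hab, lt_of_not_ge fun hc => (hR₀ _ hab hc).not_gt hR₀', hle, hR'⟩
  · rw [abs_sub_comm] at hR₀' hR'
    exact ⟨(b, a), hG a b hab, lt_of_not_ge fun hc => (hR₀ _ (hG a b hab) hc).not_gt hR₀',
      hle, hR'⟩

end SpreadPairs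

namespace CoarseStruct

variable {X : Type*} {C C' : CoarseStruct X}

theorem MacroUniform.of_lambdaEquiv {f : X → ℝ} (h : LambdaEquiv C C') (hf : C.MacroUniform f) :
    C'.MacroUniform f := by
  intro E hE
  by_contra hosc
  push Not at hosc
  have hsymm : ∀ a b, (a, b) ∈ SetRel.inv E ○ E → (b, a) ∈ SetRel.inv E ○ E :=
    fun a b ⟨t, hta, htb⟩ => ⟨t, htb, hta⟩
  have hunb (R : ℝ) : ∃ q ∈ SetRel.inv E ○ E, R < |f q.1 - f q.2| := by
    obtain ⟨_, y, ⟨_, rfl, hxy⟩, z, ⟨_, rfl, hxz⟩, hyz⟩ := hosc (max R 0 + 1) (by positivity)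
    exact ⟨(y, z), ⟨_, hxy, hxz⟩, by linarith [le_max_left R 0]⟩
  obtain ⟨p, hpG, hfar⟩ := exists_seq_lt_abs_sub hsymm hunb
  set A := range fun k => (p k).1
  set B := range fun k => (p k).2
  have hclose : C'.Close A B :=
    ⟨SetRel.inv E ○ E, C'.comp_mem _ (C'.inv_mem E hE) E hE,
      range_subset_iff.2 fun k => ⟨(p k).2, mem_range_self k, hsymm _ _ (hpG k)⟩,
      range_subset_iff.2 fun k => ⟨(p k).1, mem_range_self k, hpG k⟩⟩
  have hB : ¬C.IsBounded B := fun hB => by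
    obtain ⟨R, hR⟩ := isBounded_iff_forall_norm_le.1 (hf.isBounded_image hB)
    set k := ⌈R + |f (p 0).1|⌉₊
    have hk := hfar k 0
    have hzk := hR _ ⟨_, mem_range_self k, rfl⟩
    have := abs_sub (f (p k).2) (f (p 0).1)
    have := Nat.le_ceil (R + |f (p 0).1|)
    rw [Real.norm_eq_abs] at hzk
    linarith
  obtain ⟨r, hr⟩ := hf.exists_not_isBounded_near ((h A B).2 hclose.linked) hB
  have : Nonempty X := ⟨(p 0).1⟩
  refine hr (isBounded_of_finite (((finite_Iio ⌈r⌉₊).image fun k => (p k).2).subset ?_))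
  rintro _ ⟨⟨k, rfl⟩, _, ⟨i, rfl⟩, hki⟩
  exact ⟨k, Nat.lt_ceil.2 ((hfar k i).trans_le hki), rfl⟩

end CoarseStruct

/-- λ-equivalent coarse structures have the same macro-uniform functions. -/
theorem lambdaEquiv_macroUniform_eq {X : Type*} (C C' : CoarseStruct X)
    (h : CoarseStruct.LambdaEquiv C C') :
    ∀ f : X → ℝ, C.MacroUniform f ↔ C'.MacroUniform f :=
  fun _ => ⟨.of_lambdaEquiv h, .of_lambdaEquiv h.symm⟩
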